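/- If ψ₁ and ψ₂ both satisfy L₂ψ = 0 where L₂ = d²/dx² + (1/x + 1/(2(x-4)) + 1/(2(x-16))) d/dx + (x-8)/(4x(x-4)(x-16)), then the product ψ₁ψ₂ satisfies L₃(ψ₁ψ₂) = 0 where L₃ = d³/dx³ + (3/x + 3/(2(x-4)) + 3/(2(x-16))) d²/dx² + (7x²-68x+64)/(x²(x-4)(x-16)) d/dx + 1/(x²(x-16)). -/

import Mathlib

/-!
Writing `w = ψ₁ψ₂` and using `ψᵢ'' = -Pψᵢ' - Qψᵢ`, one gets `w'' = -Pw' - 2Qw + 2ψ₁'ψ₂'`, so the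
one product not expressible through `w` is `ψ₁'ψ₂'`. Its derivative `ψ₁''ψ₂' + ψ₁'ψ₂''` is again
`-2Pψ₁'ψ₂' - Qw'`, so differentiating once more and eliminating `ψ₁'ψ₂'` gives the symmetric square
`w''' + 3Pw'' + (2P² + P' + 4Q)w' + (4PQ + 2Q')w = 0` of `y'' + Py' + Qy = 0`. For the banana
coefficients `P, Q` of `L₂` these coefficients are those of `L₃`, a rational-function identity.
-/

open Filter Topology

theorem eventuallyEq_deriv_of_hasDerivAt {𝕜 F : Type*} [NontriviallyNormedField 𝕜]
    [NormedAddCommGroup F] [NormedSpace 𝕜 F] {s : Set 𝕜} {x : 𝕜} {f f' : 𝕜 → F}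
    (hs : IsOpen s) (hf : ∀ y ∈ s, HasDerivAt f (f' y) y) (hx : x ∈ s) : deriv f =ᶠ[𝓝 x] f' :=
  eventually_of_mem (hs.mem_nhds hx) fun y hy => (hf y hy).deriv

section SymmetricSquare

variable {s : Set ℝ} {x : ℝ} {P Q ψ ψ₁ ψ₂ : ℝ → ℝ}

theorem hasDerivAt_deriv_of_ode (hs : IsOpen s) (hψ : ContDiffOn ℝ 2 ψ s)
    (hode : ∀ x ∈ s, deriv (deriv ψ) x + P x * deriv ψ x + Q x * ψ x = 0) (hx : x ∈ s) :
    HasDerivAt (deriv ψ) (-(P x * deriv ψ x) - Q x * ψ x) x :=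
  (((hψ.deriv_of_isOpen (m := 1) hs (by norm_num)).differentiableOn one_ne_zero).hasDerivAt
    (hs.mem_nhds hx)).congr_deriv (by linarith [hode x hx])

theorem mul_satisfies_symmetricSquare (hs : IsOpen s) (hψ₁ : ContDiffOn ℝ 2 ψ₁ s)
    (hψ₂ : ContDiffOn ℝ 2 ψ₂ s)
    (hode₁ : ∀ x ∈ s, deriv (deriv ψ₁) x + P x * deriv ψ₁ x + Q x * ψ₁ x = 0)
    (hode₂ : ∀ x ∈ s, deriv (deriv ψ₂) x + P x * deriv ψ₂ x + Q x * ψ₂ x = 0)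
    (hx : x ∈ s) {P' Q' : ℝ} (hP : HasDerivAt P P' x) (hQ : HasDerivAt Q Q' x) :
    deriv (deriv (deriv (fun t => ψ₁ t * ψ₂ t))) x
      + 3 * P x * deriv (deriv (fun t => ψ₁ t * ψ₂ t)) x
      + (2 * P x ^ 2 + P' + 4 * Q x) * deriv (fun t => ψ₁ t * ψ₂ t) x
      + (4 * P x * Q x + 2 * Q') * (ψ₁ x * ψ₂ x) = 0 := by
  set w := fun t => ψ₁ t * ψ₂ t
  set w₁ := fun t => deriv ψ₁ t * ψ₂ t + ψ₁ t * deriv ψ₂ t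
  set w₂ := fun t => -(P t * w₁ t) - 2 * Q t * w t + 2 * (deriv ψ₁ t * deriv ψ₂ t)
  have hψ₁' (y : ℝ) (hy : y ∈ s) := (hψ₁.differentiableOn two_ne_zero).hasDerivAt (hs.mem_nhds hy)
  have hψ₂' (y : ℝ) (hy : y ∈ s) := (hψ₂.differentiableOn two_ne_zero).hasDerivAt (hs.mem_nhds hy)
  have hψ₁'' (y : ℝ) (hy : y ∈ s) := hasDerivAt_deriv_of_ode hs hψ₁ hode₁ hy
  have hψ₂'' (y : ℝ) (hy : y ∈ s) := hasDerivAt_deriv_of_ode hs hψ₂ hode₂ hy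
  have hw : ∀ y ∈ s, HasDerivAt w (w₁ y) y := fun y hy => (hψ₁' y hy).mul (hψ₂' y hy)
  have hw₁ : ∀ y ∈ s, HasDerivAt w₁ (w₂ y) y := fun y hy =>
    (((hψ₁'' y hy).mul (hψ₂' y hy)).add ((hψ₁' y hy).mul (hψ₂'' y hy))).congr_deriv (by ring)
  have hd₁ : deriv w =ᶠ[𝓝 x] w₁ := eventuallyEq_deriv_of_hasDerivAt hs hw hx
  have hd₂ : deriv (deriv w) =ᶠ[𝓝 x] w₂ :=
    hd₁.deriv.trans (eventuallyEq_deriv_of_hasDerivAt hs hw₁ hx)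
  have hw₂ : HasDerivAt w₂ _ x :=
    ((hP.mul (hw₁ x hx)).neg.sub ((hQ.const_mul 2).mul (hw x hx))).add
      (((hψ₁'' x hx).mul (hψ₂'' x hx)).const_mul 2)
  rw [hd₂.deriv_eq, hw₂.deriv, hd₂.eq_of_nhds, hd₁.eq_of_nhds]
  simp only [w, w₁, w₂]
  ring

end SymmetricSquare

noncomputable def bananaP (x : ℝ) : ℝ := 1/x + 1/(2*(x-4)) + 1/(2*(x-16))

noncomputable def bananaQ (x : ℝ) : ℝ := (x-8)/(4*x*(x-4)*(x-16))

theorem hasDerivAt_bananaP {x : ℝ} (h0 : x ≠ 0) (h4 : x - 4 ≠ 0) (h16 : x - 16 ≠ 0) :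
    HasDerivAt bananaP (-1/x^2 - 1/(2*(x-4)^2) - 1/(2*(x-16)^2)) x := by
  have hzero : HasDerivAt (fun t : ℝ => 1/t) (-1/x^2) x :=
    ((hasDerivAt_const x 1).fun_div (hasDerivAt_id' x) h0).congr_deriv (by ring)
  have hpole {a : ℝ} (ha : x - a ≠ 0) :
      HasDerivAt (fun t : ℝ => 1/(2*(t-a))) (-1/(2*(x-a)^2)) x :=
    ((hasDerivAt_const x 1).fun_div (((hasDerivAt_id' x).sub_const a).const_mul 2)
      (by positivity)).congr_deriv (by field_simp; ring)
  exact ((hzero.add (hpole h4)).add (hpole h16)).congr_deriv (by ring)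

theorem hasDerivAt_bananaQ {x : ℝ} (h0 : x ≠ 0) (h4 : x - 4 ≠ 0) (h16 : x - 16 ≠ 0) :
    HasDerivAt bananaQ
      ((4*x*(x-4)*(x-16) - (x-8)*(12*x^2-160*x+256)) / (4*x*(x-4)*(x-16))^2) x := by
  have hden : HasDerivAt (fun t : ℝ => 4*t*(t-4)*(t-16)) (12*x^2-160*x+256) x :=
    ((((hasDerivAt_id' x).const_mul 4).mul ((hasDerivAt_id' x).sub_const 4)).mul
      ((hasDerivAt_id' x).sub_const 16)).congr_deriv (by simp only [Pi.mul_apply]; ring)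
  exact (((hasDerivAt_id' x).sub_const 8).fun_div hden (by positivity)).congr_deriv (by ring)

theorem banana_symmetric_square_product
    (s : Set ℝ) (hs : IsOpen s)
    (hx : ∀ x ∈ s, x ≠ 0 ∧ x ≠ 4 ∧ x ≠ 16)
    (ψ₁ ψ₂ : ℝ → ℝ) (hψ₁ : ContDiffOn ℝ 2 ψ₁ s) (hψ₂ : ContDiffOn ℝ 2 ψ₂ s)
    (hode₁ : ∀ x ∈ s, deriv (deriv ψ₁) x
      + (1/x + 1/(2*(x-4)) + 1/(2*(x-16))) * deriv ψ₁ x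
      + (x-8)/(4*x*(x-4)*(x-16)) * ψ₁ x = 0)
    (hode₂ : ∀ x ∈ s, deriv (deriv ψ₂) x
      + (1/x + 1/(2*(x-4)) + 1/(2*(x-16))) * deriv ψ₂ x
      + (x-8)/(4*x*(x-4)*(x-16)) * ψ₂ x = 0) :
    ∀ x ∈ s, deriv (deriv (deriv (fun t => ψ₁ t * ψ₂ t))) x
      + (3/x + 3/(2*(x-4)) + 3/(2*(x-16))) * deriv (deriv (fun t => ψ₁ t * ψ₂ t)) x
      + (7*x^2 - 68*x + 64)/(x^2*(x-4)*(x-16)) * deriv (fun t => ψ₁ t * ψ₂ t) x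
      + 1/(x^2*(x-16)) * (ψ₁ x * ψ₂ x) = 0 := by
  intro x hxs
  obtain ⟨h0, h4, h16⟩ := hx x hxs
  replace h4 : x - 4 ≠ 0 := sub_ne_zero.mpr h4
  replace h16 : x - 16 ≠ 0 := sub_ne_zero.mpr h16
  have hc₂ : 3/x + 3/(2*(x-4)) + 3/(2*(x-16)) = 3 * bananaP x := by
    unfold bananaP; ring
  have hc₁ : (7*x^2 - 68*x + 64)/(x^2*(x-4)*(x-16))
      = 2 * bananaP x ^ 2 + (-1/x^2 - 1/(2*(x-4)^2) - 1/(2*(x-16)^2)) + 4 * bananaQ x := by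
    unfold bananaP bananaQ; field_simp; ring
  have hc₀ : 1/(x^2*(x-16)) = 4 * bananaP x * bananaQ x
      + 2 * ((4*x*(x-4)*(x-16) - (x-8)*(12*x^2-160*x+256)) / (4*x*(x-4)*(x-16))^2) := by
    unfold bananaP bananaQ; field_simp; ring
  rw [hc₂, hc₁, hc₀]
  exact mul_satisfies_symmetricSquare hs hψ₁ hψ₂ hode₁ hode₂ hxs
    (hasDerivAt_bananaP h0 h4 h16) (hasDerivAt_bananaQ h0 h4 h16)
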